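/- Let p, q > 1 with 1/p + 1/q = 1, and define h(t,u) = 1/(1-e^{-t}) - e^{-(u+1)pt}/(1-e^{-pt}) - e^{uqt}/(1-e^{-qt}). If u ≥ 0 or u ≤ -1, then for each fixed u, the map t ↦ h(t,u) is strictly decreasing on (0,∞). -/

import Mathlib

open Real Set

/-! With `bose u s = e^{-us} / (e^s - 1)` one has
`h p q t u = bose (-1) t - bose u (p t) - bose (-1-u) (q t)`, and `u ↦ -1-u` preserves `u ∉ (-1, 0)`.
We have `-∂ₛ bose u s = e^{-us} ((u+1) e^s - u) / (e^s - 1)²`, and for `u ∉ (-1, 0)` the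
Bernoulli-type bound `(u+1) e^s - u ≤ e^{(u+1)s}` (convexity in `u`, equality at `u = -1, 0`)
bounds it by `B(s) = -∂ₛ bose (-1) s = 1 / (4 sinh² (s/2))`. Since `c sinh x < sinh (c x)` for `c > 1`,
`c² B(c t) < B(t)`, so `∂ₜ h < -B(t) + B(t)/p + B(t)/q = 0`. -/

/-- h(t,u) = 1/(1-e^{-t}) - e^{-(u+1)pt}/(1-e^{-pt}) - e^{uqt}/(1-e^{-qt}) -/
noncomputable def h (p q t u : ℝ) : ℝ :=
  1 / (1 - exp (-t)) - exp (-((u + 1) * p * t)) / (1 - exp (-(p * t)))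
    - exp (u * q * t) / (1 - exp (-(q * t)))

theorem ConvexOn.apply_le_apply_of_notMem_Ioo {𝕜 β : Type*} [Field 𝕜] [LinearOrder 𝕜]
    [IsStrictOrderedRing 𝕜] [AddCommMonoid β] [LinearOrder β] [IsOrderedCancelAddMonoid β]
    [Module 𝕜 β] [PosSMulStrictMono 𝕜 β] {f : 𝕜 → β} {s : Set 𝕜} (hf : ConvexOn 𝕜 s f)
    {a b x : 𝕜} (ha : a ∈ s) (hb : b ∈ s) (hx : x ∈ s) (hab : a < b) (hfab : f a = f b)
    (hxab : x ∉ Ioo a b) : f a ≤ f x := by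
  rcases le_or_gt x a with hxa | hax
  · exact hf.le_left_of_right_le'' hx hb hxa hab hfab.ge
  · have hbx : b ≤ x := not_lt.1 fun hxb => hxab ⟨hax, hxb⟩
    exact hfab ▸ hf.le_right_of_left_le'' ha hx hab hbx hfab.le

theorem one_add_mul_exp_sub_one_le_exp_mul (s : ℝ) {r : ℝ} (hr : r ∉ Ioo 0 1) :
    1 + r * (exp s - 1) ≤ exp (r * s) := by
  have hconv : ConvexOn ℝ univ (fun r : ℝ => exp (r * s) - r * (exp s - 1)) :=
    (convexOn_exp.comp_linearMap (LinearMap.mulRight ℝ s)).sub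
      ((LinearMap.mulRight ℝ (exp s - 1)).concaveOn convex_univ)
  have := hconv.apply_le_apply_of_notMem_Ioo (mem_univ 0) (mem_univ 1) (mem_univ r) one_pos
    (by simp) hr
  simp only [zero_mul, exp_zero, sub_zero] at this
  linarith

theorem mul_sinh_lt_sinh_mul {c x : ℝ} (hc : 1 < c) (hx : 0 < x) : c * sinh x < sinh (c * x) := by
  have hmono : StrictMonoOn (fun x => sinh (c * x) - c * sinh x) (Ici 0) := by
    refine strictMonoOn_of_hasDerivWithinAt_pos (convex_Ici 0) (by fun_prop)
      (fun y _ => (((hasDerivAt_id y).const_mul c).sinh.sub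
        ((hasDerivAt_sinh y).const_mul c)).hasDerivWithinAt) fun y hy => ?_
    rw [interior_Ici, mem_Ioi] at hy
    have : cosh y < cosh (c * y) := by
      rw [cosh_lt_cosh, abs_of_pos hy, abs_of_pos (by positivity)]
      nlinarith
    simp only [id, mul_one]
    nlinarith
  simpa using hmono self_mem_Ici hx.le hx

noncomputable def bose (u s : ℝ) : ℝ := exp (-(u * s)) / (exp s - 1)

noncomputable def negDerivBose (u s : ℝ) : ℝ :=
  exp (-(u * s)) * ((u + 1) * exp s - u) / (exp s - 1) ^ 2

theorem exp_neg_mul_div_one_sub_exp_neg (u s : ℝ) :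
    exp (-((u + 1) * s)) / (1 - exp (-s)) = bose u s := by
  rw [bose, ← mul_div_mul_right _ (1 - exp (-s)) (exp_pos s).ne', sub_mul, one_mul,
    ← exp_add, ← exp_add, neg_add_cancel, exp_zero]
  ring_nf

theorem h_eq_bose (p q t u : ℝ) :
    h p q t u = bose (-1) t - bose u (p * t) - bose (-1 - u) (q * t) := by
  simp only [← exp_neg_mul_div_one_sub_exp_neg, h]
  ring_nf
  rw [exp_zero, mul_one]

theorem hasDerivAt_bose (u : ℝ) {s : ℝ} (hs : s ≠ 0) :
    HasDerivAt (bose u) (-negDerivBose u s) s := by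
  have hden : exp s - 1 ≠ 0 := sub_ne_zero.2 (exp_eq_one_iff s |>.not.2 hs)
  have hnum : HasDerivAt (fun s => exp (-(u * s))) (exp (-(u * s)) * -u) s :=
    ((hasDerivAt_id s).const_mul u).neg.exp.congr_deriv (by simp)
  refine (hnum.div ((hasDerivAt_exp s).sub_const 1) hden).congr_deriv ?_
  unfold negDerivBose
  ring

theorem hasDerivAt_bose_mul (u : ℝ) {c t : ℝ} (hct : c * t ≠ 0) :
    HasDerivAt (fun t => bose u (c * t)) (-(c * negDerivBose u (c * t))) t := by
  refine ((hasDerivAt_bose u hct).comp t ((hasDerivAt_id t).const_mul c)).congr_deriv ?_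
  ring

theorem negDerivBose_le_negDerivBose_neg_one (s : ℝ) {u : ℝ} (hu : 0 ≤ u ∨ u ≤ -1) :
    negDerivBose u s ≤ negDerivBose (-1) s := by
  have hr : u + 1 ∉ Ioo 0 1 := by rintro ⟨h0, h1⟩; rcases hu with hu | hu <;> linarith
  have key : exp (-(u * s)) * ((u + 1) * exp s - u) ≤ exp s := calc
    _ ≤ exp (-(u * s)) * exp ((u + 1) * s) := by
      gcongr
      linarith [one_add_mul_exp_sub_one_le_exp_mul s hr]
    _ = exp s := by rw [← exp_add]; ring_nf
  unfold negDerivBose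
  refine div_le_div_of_nonneg_right ?_ (sq_nonneg _)
  simpa using key

theorem negDerivBose_neg_one (s : ℝ) : negDerivBose (-1) s = 1 / (4 * sinh (s / 2) ^ 2) := by
  have h2 : exp (s / 2) ^ 2 = exp s := by rw [← exp_nat_mul]; ring_nf
  have h : exp s - 1 = 2 * exp (s / 2) * sinh (s / 2) := by
    rw [sinh_eq, ← h2, exp_neg]
    field_simp
  rw [negDerivBose, h, mul_pow, mul_pow, h2]
  field_simp
  ring_nf

theorem sq_mul_negDerivBose_neg_one_lt {c s : ℝ} (hc : 1 < c) (hs : 0 < s) :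
    c ^ 2 * negDerivBose (-1) (c * s) < negDerivBose (-1) s := by
  have hsinh : 0 < sinh (s / 2) := sinh_pos_iff.2 (half_pos hs)
  have hlt : c * sinh (s / 2) < sinh (c * s / 2) := by
    simpa [mul_div_assoc] using mul_sinh_lt_sinh_mul hc (half_pos hs)
  have hsq : (c * sinh (s / 2)) ^ 2 < sinh (c * s / 2) ^ 2 :=
    pow_lt_pow_left₀ hlt (by positivity) two_ne_zero
  rw [negDerivBose_neg_one, negDerivBose_neg_one, mul_one_div,
    div_lt_div_iff₀ (by nlinarith) (by positivity)]
  nlinarith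

theorem mul_negDerivBose_mul_lt {c t v : ℝ} (hc : 1 < c) (ht : 0 < t) (hv : 0 ≤ v ∨ v ≤ -1) :
    c * negDerivBose v (c * t) < negDerivBose (-1) t / c := by
  rw [lt_div_iff₀ (by linarith)]
  calc c * negDerivBose v (c * t) * c ≤ c ^ 2 * negDerivBose (-1) (c * t) := by
        nlinarith [negDerivBose_le_negDerivBose_neg_one (c * t) hv]
    _ < negDerivBose (-1) t := sq_mul_negDerivBose_neg_one_lt hc ht

theorem hasDerivAt_h (p q u : ℝ) (hp : p ≠ 0) (hq : q ≠ 0) {t : ℝ} (ht : t ≠ 0) :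
    HasDerivAt (fun t => h p q t u)
      (-negDerivBose (-1) t + p * negDerivBose u (p * t) + q * negDerivBose (-1 - u) (q * t)) t := by
  simp only [h_eq_bose]
  refine (((hasDerivAt_bose (-1) ht).sub (hasDerivAt_bose_mul u (mul_ne_zero hp ht))).sub
    (hasDerivAt_bose_mul (-1 - u) (mul_ne_zero hq ht))).congr_deriv ?_
  ring

theorem h_strictAnti_in_t (p q : ℝ) (hp : 1 < p) (hq : 1 < q) (hpq : 1 / p + 1 / q = 1)
    (u : ℝ) (hu : 0 ≤ u ∨ u ≤ -1) :
    StrictAntiOn (fun t : ℝ => h p q t u) (Ioi (0 : ℝ)) := by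
  have hp0 : 0 < p := by linarith
  have hq0 : 0 < q := by linarith
  have hderiv (t : ℝ) (ht : t ∈ Ioi 0) := hasDerivAt_h p q u hp0.ne' hq0.ne' (ne_of_gt ht)
  refine strictAntiOn_of_hasDerivWithinAt_neg (convex_Ioi 0)
    (fun t ht => (hderiv t ht).continuousAt.continuousWithinAt)
    (fun t ht => (hderiv t (interior_subset ht)).hasDerivWithinAt) fun t ht => ?_
  rw [interior_Ioi] at ht
  have hu' : 0 ≤ -1 - u ∨ -1 - u ≤ -1 := by rcases hu with hu | hu <;> [right; left] <;> linarith
  have hsum : negDerivBose (-1) t / p + negDerivBose (-1) t / q = negDerivBose (-1) t := by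
    rw [div_eq_mul_one_div, div_eq_mul_one_div _ q, ← mul_add, hpq, mul_one]
  linarith [mul_negDerivBose_mul_lt hp ht hu, mul_negDerivBose_mul_lt hq ht hu']
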